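/- The order-N deformed symplectic form is invariant under the projected Killing flow: for every θ ∈ ℝ, N ∈ ℕ, t ∈ ℝ and all smooth compactly supported f, g : ℝ³ → ℂ, σ_{θ,N}(Φ_t f, Φ_t g) = σ_{θ,N}(f, g). -/

import Mathlib

open MeasureTheory Real

noncomputable section

abbrev P3 := ℝ × ℝ × ℝ

/-- Partial derivative in the first (V) coordinate. -/
def pdV (f : P3 → ℂ) (p : P3) : ℂ :=
  deriv (fun v : ℝ => f (v, p.2.1, p.2.2)) p.1

/-- Partial derivative in the third (φ) coordinate. -/
def pdPhi (f : P3 → ℂ) (p : P3) : ℂ :=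
  deriv (fun s : ℝ => f (p.1, p.2.1, s)) p.2.2

/-- Euler operator E = V·∂_V. -/
def euler (f : P3 → ℂ) (p : P3) : ℂ := (p.1 : ℂ) * pdV f p

def pdX (u : P3 × P3 → ℂ) (q : P3 × P3) : ℂ :=
  deriv (fun x : ℝ => u ((x, q.1.2.1, q.1.2.2), q.2)) q.1.1

def pdXi (u : P3 × P3 → ℂ) (q : P3 × P3) : ℂ :=
  deriv (fun s : ℝ => u ((q.1.1, q.1.2.1, s), q.2)) q.1.2.2

def pdY (u : P3 × P3 → ℂ) (q : P3 × P3) : ℂ :=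
  deriv (fun y : ℝ => u (q.1, (y, q.2.2.1, q.2.2.2))) q.2.1

def pdEta (u : P3 × P3 → ℂ) (q : P3 × P3) : ℂ :=
  deriv (fun s : ℝ => u (q.1, (q.2.1, q.2.2.1, s))) q.2.2.2

/-- The operator D: (Du)((X,ϑ₁,ξ),(Y,ϑ₂,η)) = X·∂_X∂_η u − Y·∂_Y∂_ξ u. -/
def Dop (u : P3 × P3 → ℂ) : P3 × P3 → ℂ :=
  fun q => (q.1.1 : ℂ) * pdX (pdEta u) q - (q.2.1 : ℂ) * pdY (pdXi u) q

def tensorF (f g : P3 → ℂ) : P3 × P3 → ℂ := fun q => f q.1 * g q.2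

/-- Order-N deformed product: (f ⋆_{θ,N} g)(p) = Σ_{k=0}^{N} ((iθ)^k/k!)·(D^k F)(p,p). -/
def starN (θ : ℝ) (N : ℕ) (f g : P3 → ℂ) : P3 → ℂ :=
  fun p => ∑ k ∈ Finset.range (N + 1),
    ((Complex.I * (θ : ℂ)) ^ k / (Nat.factorial k : ℂ)) * (Dop^[k] (tensorF f g)) (p, p)

/-- The measure dV ⊗ dμ(ϑ) ⊗ dφ on ℝ³. -/
def meas3 (μ : Measure ℝ) : Measure P3 :=
  (volume : Measure ℝ).prod (μ.prod (volume : Measure ℝ))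

/-- The order-N deformed symplectic form
σ_{θ,N}(f,g) := ∫ ( f ⋆_{θ,N} (∂_V g) − g ⋆_{θ,N} (∂_V f) ) dV dμ(ϑ) dφ. -/
def sigmaN (μ : Measure ℝ) (θ : ℝ) (N : ℕ) (f g : P3 → ℂ) : ℂ :=
  ∫ p, (starN θ N f (pdV g) p - starN θ N g (pdV f) p) ∂(meas3 μ)

/-- The projected Killing (dilation) flow (Φ_t f)(V,ϑ,φ) = f(e^{2πt}V,ϑ,φ). -/
def flow (t : ℝ) (f : P3 → ℂ) : P3 → ℂ :=
  fun p => f (Real.exp (2 * π * t) * p.1, p.2.1, p.2.2)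


/-! ### Auxiliary lemmas -/

section Aux

open Topology Function Set

def eX6 : P3 × P3 := ((1,0,0),(0,0,0))
def eY6 : P3 × P3 := ((0,0,0),(1,0,0))
def eV3 : P3 := (1,0,0)

lemma hasDerivAt_lineX (u : P3 × P3 → ℂ) (hu : Differentiable ℝ u) (q : P3 × P3) :
    HasDerivAt (fun x : ℝ => u ((x, q.1.2.1, q.1.2.2), q.2)) (fderiv ℝ u q eX6) q.1.1 := by
  have hL : HasDerivAt (fun x : ℝ => (((x, q.1.2.1, q.1.2.2), q.2) : P3 × P3)) eX6 q.1.1 :=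
    ((hasDerivAt_id q.1.1).prodMk ((hasDerivAt_const _ _).prodMk (hasDerivAt_const _ _))).prodMk
      (hasDerivAt_const _ _)
  exact ((hu q).hasFDerivAt.comp_hasDerivAt q.1.1 hL : _)

lemma hasDerivAt_lineY (u : P3 × P3 → ℂ) (hu : Differentiable ℝ u) (q : P3 × P3) :
    HasDerivAt (fun y : ℝ => u (q.1, (y, q.2.2.1, q.2.2.2))) (fderiv ℝ u q eY6) q.2.1 := by
  have hL : HasDerivAt (fun y : ℝ => ((q.1, (y, q.2.2.1, q.2.2.2)) : P3 × P3)) eY6 q.2.1 :=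
    (hasDerivAt_const _ _).prodMk
      ((hasDerivAt_id q.2.1).prodMk ((hasDerivAt_const _ _).prodMk (hasDerivAt_const _ _)))
  exact ((hu q).hasFDerivAt.comp_hasDerivAt q.2.1 hL : _)

lemma hasDerivAt_lineV (g : P3 → ℂ) (hg : Differentiable ℝ g) (p : P3) :
    HasDerivAt (fun v : ℝ => g (v, p.2.1, p.2.2)) (fderiv ℝ g p eV3) p.1 := by
  have hL : HasDerivAt (fun v : ℝ => ((v, p.2.1, p.2.2) : P3)) eV3 p.1 :=
    (hasDerivAt_id p.1).prodMk ((hasDerivAt_const _ _).prodMk (hasDerivAt_const _ _))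
  exact ((hg p).hasFDerivAt.comp_hasDerivAt p.1 hL : _)

lemma pdX_eq (u : P3 × P3 → ℂ) (hu : Differentiable ℝ u) (q : P3 × P3) :
    pdX u q = fderiv ℝ u q eX6 := (hasDerivAt_lineX u hu q).deriv

lemma pdY_eq (u : P3 × P3 → ℂ) (hu : Differentiable ℝ u) (q : P3 × P3) :
    pdY u q = fderiv ℝ u q eY6 := (hasDerivAt_lineY u hu q).deriv

lemma pdV_eq (g : P3 → ℂ) (hg : Differentiable ℝ g) (p : P3) :
    pdV g p = fderiv ℝ g p eV3 := (hasDerivAt_lineV g hg p).deriv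

lemma contDiff_pdX {u : P3 × P3 → ℂ} (hu : ContDiff ℝ (⊤ : ℕ∞) u) : ContDiff ℝ (⊤ : ℕ∞) (pdX u) := by
  have h : pdX u = fun q => fderiv ℝ u q eX6 :=
    funext fun q => pdX_eq u (hu.differentiable (by simp)) q
  rw [h]
  exact (hu.fderiv_right (by simp)).clm_apply contDiff_const

lemma contDiff_pdY {u : P3 × P3 → ℂ} (hu : ContDiff ℝ (⊤ : ℕ∞) u) : ContDiff ℝ (⊤ : ℕ∞) (pdY u) := by
  have h : pdY u = fun q => fderiv ℝ u q eY6 :=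
    funext fun q => pdY_eq u (hu.differentiable (by simp)) q
  rw [h]
  exact (hu.fderiv_right (by simp)).clm_apply contDiff_const

lemma contDiff_pdV {g : P3 → ℂ} (hg : ContDiff ℝ (⊤ : ℕ∞) g) : ContDiff ℝ (⊤ : ℕ∞) (pdV g) := by
  have h : pdV g = fun p => fderiv ℝ g p eV3 :=
    funext fun p => pdV_eq g (hg.differentiable (by simp)) p
  rw [h]
  exact (hg.fderiv_right (by simp)).clm_apply contDiff_const

lemma contDiff_pdEta {u : P3 × P3 → ℂ} (hu : ContDiff ℝ (⊤ : ℕ∞) u) : ContDiff ℝ (⊤ : ℕ∞) (pdEta u) := by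
  have hd := hu.differentiable (by simp)
  have h : pdEta u = fun q => fderiv ℝ u q ((0,0,0),(0,0,1)) := by
    funext q
    have hL : HasDerivAt (fun s : ℝ => ((q.1, (q.2.1, q.2.2.1, s)) : P3 × P3))
        ((0,0,0),(0,0,1)) q.2.2.2 :=
      (hasDerivAt_const _ _).prodMk
        ((hasDerivAt_const _ _).prodMk ((hasDerivAt_const _ _).prodMk (hasDerivAt_id _)))
    exact ((hd q).hasFDerivAt.comp_hasDerivAt q.2.2.2 hL : HasDerivAt _ _ _).deriv
  rw [h]
  exact (hu.fderiv_right (by simp)).clm_apply contDiff_const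

lemma contDiff_pdXi {u : P3 × P3 → ℂ} (hu : ContDiff ℝ (⊤ : ℕ∞) u) : ContDiff ℝ (⊤ : ℕ∞) (pdXi u) := by
  have hd := hu.differentiable (by simp)
  have h : pdXi u = fun q => fderiv ℝ u q ((0,0,1),(0,0,0)) := by
    funext q
    have hL : HasDerivAt (fun s : ℝ => (((q.1.1, q.1.2.1, s), q.2) : P3 × P3))
        ((0,0,1),(0,0,0)) q.1.2.2 :=
      ((hasDerivAt_const _ _).prodMk ((hasDerivAt_const _ _).prodMk (hasDerivAt_id _))).prodMk
        (hasDerivAt_const _ _)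
    exact ((hd q).hasFDerivAt.comp_hasDerivAt q.1.2.2 hL : HasDerivAt _ _ _).deriv
  rw [h]
  exact (hu.fderiv_right (by simp)).clm_apply contDiff_const

lemma contDiff_Dop {u : P3 × P3 → ℂ} (hu : ContDiff ℝ (⊤ : ℕ∞) u) : ContDiff ℝ (⊤ : ℕ∞) (Dop u) := by
  have h1 : ContDiff ℝ (⊤ : ℕ∞) (fun q : P3 × P3 => ((q.1.1 : ℝ) : ℂ)) :=
    Complex.ofRealCLM.contDiff.comp (contDiff_fst.fst)
  have h2 : ContDiff ℝ (⊤ : ℕ∞) (fun q : P3 × P3 => ((q.2.1 : ℝ) : ℂ)) :=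
    Complex.ofRealCLM.contDiff.comp (contDiff_fst.comp contDiff_snd)
  exact (h1.mul (contDiff_pdX (contDiff_pdEta hu))).sub
    (h2.mul (contDiff_pdY (contDiff_pdXi hu)))

lemma contDiff_DopIter {u : P3 × P3 → ℂ} (hu : ContDiff ℝ (⊤ : ℕ∞) u) (k : ℕ) :
    ContDiff ℝ (⊤ : ℕ∞) (Dop^[k] u) := by
  induction k with
  | zero => exact hu
  | succ k ih => rw [Function.iterate_succ_apply']; exact contDiff_Dop ih

lemma contDiff_tensorF {f g : P3 → ℂ} (hf : ContDiff ℝ (⊤ : ℕ∞) f) (hg : ContDiff ℝ (⊤ : ℕ∞) g) :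
    ContDiff ℝ (⊤ : ℕ∞) (tensorF f g) := (hf.comp contDiff_fst).mul (hg.comp contDiff_snd)

/-! ### Vanishing outside the support -/

lemma pdX_eq_zero {u : P3 × P3 → ℂ} {q : P3 × P3} (h : q ∉ tsupport u) : pdX u q = 0 := by
  rw [notMem_tsupport_iff_eventuallyEq] at h
  have hL : ContinuousAt (fun x : ℝ => (((x, q.1.2.1, q.1.2.2), q.2) : P3 × P3)) q.1.1 := by
    fun_prop
  have h2 : (fun x : ℝ => u ((x, q.1.2.1, q.1.2.2), q.2)) =ᶠ[𝓝 q.1.1] (fun _ => 0) :=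
    h.comp_tendsto hL
  rw [pdX, h2.deriv_eq, deriv_const]

lemma pdY_eq_zero {u : P3 × P3 → ℂ} {q : P3 × P3} (h : q ∉ tsupport u) : pdY u q = 0 := by
  rw [notMem_tsupport_iff_eventuallyEq] at h
  have hL : ContinuousAt (fun y : ℝ => ((q.1, (y, q.2.2.1, q.2.2.2)) : P3 × P3)) q.2.1 := by
    fun_prop
  have h2 : (fun y : ℝ => u (q.1, (y, q.2.2.1, q.2.2.2))) =ᶠ[𝓝 q.2.1] (fun _ => 0) :=
    h.comp_tendsto hL
  rw [pdY, h2.deriv_eq, deriv_const]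

lemma pdXi_eq_zero {u : P3 × P3 → ℂ} {q : P3 × P3} (h : q ∉ tsupport u) : pdXi u q = 0 := by
  rw [notMem_tsupport_iff_eventuallyEq] at h
  have hL : ContinuousAt (fun s : ℝ => (((q.1.1, q.1.2.1, s), q.2) : P3 × P3)) q.1.2.2 := by
    fun_prop
  have h2 : (fun s : ℝ => u ((q.1.1, q.1.2.1, s), q.2)) =ᶠ[𝓝 q.1.2.2] (fun _ => 0) :=
    h.comp_tendsto hL
  rw [pdXi, h2.deriv_eq, deriv_const]

lemma pdEta_eq_zero {u : P3 × P3 → ℂ} {q : P3 × P3} (h : q ∉ tsupport u) : pdEta u q = 0 := by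
  rw [notMem_tsupport_iff_eventuallyEq] at h
  have hL : ContinuousAt (fun s : ℝ => ((q.1, (q.2.1, q.2.2.1, s)) : P3 × P3)) q.2.2.2 := by
    fun_prop
  have h2 : (fun s : ℝ => u (q.1, (q.2.1, q.2.2.1, s))) =ᶠ[𝓝 q.2.2.2] (fun _ => 0) :=
    h.comp_tendsto hL
  rw [pdEta, h2.deriv_eq, deriv_const]

lemma tsupport_pdXi {u : P3 × P3 → ℂ} : tsupport (pdXi u) ⊆ tsupport u :=
  closure_minimal (fun q hq => by
    by_contra h; exact hq (pdXi_eq_zero h)) isClosed_closure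

lemma tsupport_pdEta {u : P3 × P3 → ℂ} : tsupport (pdEta u) ⊆ tsupport u :=
  closure_minimal (fun q hq => by
    by_contra h; exact hq (pdEta_eq_zero h)) isClosed_closure

lemma Dop_eq_zero {u : P3 × P3 → ℂ} {q : P3 × P3} (h : q ∉ tsupport u) : Dop u q = 0 := by
  have h1 : pdX (pdEta u) q = 0 := pdX_eq_zero (fun hq => h (tsupport_pdEta hq))
  have h2 : pdY (pdXi u) q = 0 := pdY_eq_zero (fun hq => h (tsupport_pdXi hq))
  simp [Dop, h1, h2]

lemma tsupport_Dop {u : P3 × P3 → ℂ} : tsupport (Dop u) ⊆ tsupport u :=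
  closure_minimal (fun q hq => by
    by_contra h; exact hq (Dop_eq_zero h)) isClosed_closure

lemma tsupport_DopIter {u : P3 × P3 → ℂ} (k : ℕ) : tsupport (Dop^[k] u) ⊆ tsupport u := by
  induction k with
  | zero => exact subset_rfl
  | succ k ih => rw [Function.iterate_succ_apply']; exact tsupport_Dop.trans ih

lemma tsupport_tensorF {f g : P3 → ℂ} :
    tsupport (tensorF f g) ⊆ (tsupport f) ×ˢ (univ : Set P3) := by
  apply closure_minimal _ ((isClosed_tsupport f).prod isClosed_univ)
  intro q hq
  refine ⟨subset_tsupport f ?_, trivial⟩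
  intro h0
  exact hq (by simp [tensorF, h0])

/-! ### Linearity in a scalar -/

lemma pdX_const_mul (u : P3 × P3 → ℂ) (a : ℂ) :
    pdX (fun q => a * u q) = fun q => a * pdX u q := by
  funext q; exact deriv_const_mul_field a

lemma pdY_const_mul (u : P3 × P3 → ℂ) (a : ℂ) :
    pdY (fun q => a * u q) = fun q => a * pdY u q := by
  funext q; exact deriv_const_mul_field a

lemma pdXi_const_mul (u : P3 × P3 → ℂ) (a : ℂ) :
    pdXi (fun q => a * u q) = fun q => a * pdXi u q := by
  funext q; exact deriv_const_mul_field a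

lemma pdEta_const_mul (u : P3 × P3 → ℂ) (a : ℂ) :
    pdEta (fun q => a * u q) = fun q => a * pdEta u q := by
  funext q; exact deriv_const_mul_field a

lemma Dop_const_mul (u : P3 × P3 → ℂ) (a : ℂ) :
    Dop (fun q => a * u q) = fun q => a * Dop u q := by
  funext q
  show (q.1.1 : ℂ) * pdX (pdEta fun q => a * u q) q - (q.2.1 : ℂ) * pdY (pdXi fun q => a * u q) q
      = a * ((q.1.1 : ℂ) * pdX (pdEta u) q - (q.2.1 : ℂ) * pdY (pdXi u) q)
  rw [pdEta_const_mul, pdXi_const_mul, pdX_const_mul, pdY_const_mul]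
  ring

lemma DopIter_const_mul (u : P3 × P3 → ℂ) (a : ℂ) (k : ℕ) :
    Dop^[k] (fun q => a * u q) = fun q => a * Dop^[k] u q := by
  induction k with
  | zero => rfl
  | succ k ih =>
    rw [Function.iterate_succ_apply', ih, Dop_const_mul, Function.iterate_succ_apply']

/-! ### Scaling -/

def Sm (c : ℝ) (q : P3 × P3) : P3 × P3 :=
  ((c * q.1.1, q.1.2.1, q.1.2.2), (c * q.2.1, q.2.2.1, q.2.2.2))

def sm (c : ℝ) (p : P3) : P3 := (c * p.1, p.2.1, p.2.2)

lemma pdEta_comp_Sm (c : ℝ) (u : P3 × P3 → ℂ) :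
    pdEta (fun q => u (Sm c q)) = fun q => pdEta u (Sm c q) := rfl

lemma pdXi_comp_Sm (c : ℝ) (u : P3 × P3 → ℂ) :
    pdXi (fun q => u (Sm c q)) = fun q => pdXi u (Sm c q) := rfl

lemma pdX_comp_Sm (c : ℝ) (u : P3 × P3 → ℂ) (hu : Differentiable ℝ u) :
    pdX (fun q => u (Sm c q)) = fun q => (c : ℂ) * pdX u (Sm c q) := by
  funext q
  have h1 : HasDerivAt (fun x : ℝ => u ((x, q.1.2.1, q.1.2.2), (Sm c q).2))
      (fderiv ℝ u (Sm c q) eX6) (c * q.1.1) := hasDerivAt_lineX u hu (Sm c q)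
  have h2 : HasDerivAt (fun x : ℝ => c * x) c q.1.1 := by
    simpa using (hasDerivAt_id q.1.1).const_mul c
  have h3 := (h1.scomp q.1.1 h2).deriv
  rw [pdX_eq u hu (Sm c q)]
  rw [show pdX (fun q => u (Sm c q)) q
      = deriv ((fun x : ℝ => u ((x, q.1.2.1, q.1.2.2), (Sm c q).2)) ∘
          fun x : ℝ => c * x) q.1.1 from rfl, h3]
  exact Complex.real_smul

lemma pdY_comp_Sm (c : ℝ) (u : P3 × P3 → ℂ) (hu : Differentiable ℝ u) :
    pdY (fun q => u (Sm c q)) = fun q => (c : ℂ) * pdY u (Sm c q) := by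
  funext q
  have h1 : HasDerivAt (fun y : ℝ => u ((Sm c q).1, (y, q.2.2.1, q.2.2.2)))
      (fderiv ℝ u (Sm c q) eY6) (c * q.2.1) := hasDerivAt_lineY u hu (Sm c q)
  have h2 : HasDerivAt (fun y : ℝ => c * y) c q.2.1 := by
    simpa using (hasDerivAt_id q.2.1).const_mul c
  have h3 := (h1.scomp q.2.1 h2).deriv
  rw [pdY_eq u hu (Sm c q)]
  rw [show pdY (fun q => u (Sm c q)) q
      = deriv ((fun y : ℝ => u ((Sm c q).1, (y, q.2.2.1, q.2.2.2))) ∘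
          fun y : ℝ => c * y) q.2.1 from rfl, h3]
  exact Complex.real_smul

lemma pdV_comp_sm (c : ℝ) (g : P3 → ℂ) (hg : Differentiable ℝ g) :
    pdV (fun p => g (sm c p)) = fun p => (c : ℂ) * pdV g (sm c p) := by
  funext p
  have h1 : HasDerivAt (fun v : ℝ => g (v, p.2.1, p.2.2))
      (fderiv ℝ g (sm c p) eV3) (c * p.1) := hasDerivAt_lineV g hg (sm c p)
  have h2 : HasDerivAt (fun v : ℝ => c * v) c p.1 := by
    simpa using (hasDerivAt_id p.1).const_mul c
  have h3 := (h1.scomp p.1 h2).deriv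
  rw [pdV_eq g hg (sm c p)]
  rw [show pdV (fun p => g (sm c p)) p
      = deriv ((fun v : ℝ => g (v, p.2.1, p.2.2)) ∘ fun v : ℝ => c * v) p.1
      from rfl, h3]
  exact Complex.real_smul

lemma Dop_comp_Sm (c : ℝ) {u : P3 × P3 → ℂ} (hu : ContDiff ℝ (⊤ : ℕ∞) u) :
    Dop (fun q => u (Sm c q)) = fun q => Dop u (Sm c q) := by
  funext q
  show (q.1.1 : ℂ) * pdX (pdEta fun q => u (Sm c q)) q
      - (q.2.1 : ℂ) * pdY (pdXi fun q => u (Sm c q)) q = Dop u (Sm c q)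
  rw [pdEta_comp_Sm, pdXi_comp_Sm,
      pdX_comp_Sm c _ ((contDiff_pdEta hu).differentiable (by simp)),
      pdY_comp_Sm c _ ((contDiff_pdXi hu).differentiable (by simp))]
  show (q.1.1 : ℂ) * ((c : ℂ) * pdX (pdEta u) (Sm c q))
      - (q.2.1 : ℂ) * ((c : ℂ) * pdY (pdXi u) (Sm c q))
      = ((c * q.1.1 : ℝ) : ℂ) * pdX (pdEta u) (Sm c q)
        - ((c * q.2.1 : ℝ) : ℂ) * pdY (pdXi u) (Sm c q)
  push_cast
  ring

lemma DopIter_comp_Sm (c : ℝ) {u : P3 × P3 → ℂ} (hu : ContDiff ℝ (⊤ : ℕ∞) u) (k : ℕ) :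
    Dop^[k] (fun q => u (Sm c q)) = fun q => Dop^[k] u (Sm c q) := by
  induction k with
  | zero => rfl
  | succ k ih =>
    rw [Function.iterate_succ_apply', ih, Dop_comp_Sm c (contDiff_DopIter hu k),
      Function.iterate_succ_apply']

/-! ### starN lemmas -/

lemma starN_const_mul_right (θ : ℝ) (N : ℕ) (f h : P3 → ℂ) (a : ℂ) :
    starN θ N f (fun p => a * h p) = fun p => a * starN θ N f h p := by
  funext p
  unfold starN
  have ht : tensorF f (fun p => a * h p) = fun q => a * tensorF f h q := by
    funext q; simp only [tensorF]; ring
  rw [ht, Finset.mul_sum]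
  refine Finset.sum_congr rfl fun k _ => ?_
  rw [DopIter_const_mul]
  ring

lemma starN_comp_sm (c θ : ℝ) (N : ℕ) (f h : P3 → ℂ) (hT : ContDiff ℝ (⊤ : ℕ∞) (tensorF f h))
    (p : P3) :
    starN θ N (fun p => f (sm c p)) (fun p => h (sm c p)) p = starN θ N f h (sm c p) := by
  unfold starN
  have ht : tensorF (fun p => f (sm c p)) (fun p => h (sm c p))
      = fun q => tensorF f h (Sm c q) := rfl
  rw [ht]
  refine Finset.sum_congr rfl fun k _ => ?_
  rw [DopIter_comp_Sm c hT k]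
  rfl

lemma continuous_starN (θ : ℝ) (N : ℕ) (f h : P3 → ℂ) (hT : ContDiff ℝ (⊤ : ℕ∞) (tensorF f h)) :
    Continuous (starN θ N f h) := by
  unfold starN
  refine continuous_finset_sum _ fun k _ => ?_
  exact continuous_const.mul
    ((contDiff_DopIter hT k).continuous.comp (continuous_id.prodMk continuous_id))

lemma hcs_starN (θ : ℝ) (N : ℕ) (f h : P3 → ℂ) (hfc : HasCompactSupport f) :
    HasCompactSupport (starN θ N f h) := by
  apply HasCompactSupport.intro hfc
  intro p hp
  unfold starN
  refine Finset.sum_eq_zero fun k _ => ?_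
  have hnot : ((p, p) : P3 × P3) ∉ tsupport (tensorF f h) := by
    intro hmem
    exact hp (tsupport_tensorF hmem).1
  have hz : Dop^[k] (tensorF f h) (p, p) = 0 := by
    by_contra h0
    exact hnot (tsupport_DopIter k (subset_tsupport _ h0))
  rw [hz, mul_zero]

end Aux

/-- **Invariance of the order-N deformed symplectic form under the projected
Killing flow**: σ_{θ,N}(Φ_t f, Φ_t g) = σ_{θ,N}(f,g). -/
theorem sigmaN_flow_invariant (μ : Measure ℝ) [IsFiniteMeasureOnCompacts μ]
    (θ : ℝ) (N : ℕ) (t : ℝ) (f g : P3 → ℂ)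
    (hf : ContDiff ℝ (⊤ : ℕ∞) f) (hg : ContDiff ℝ (⊤ : ℕ∞) g)
    (hfc : HasCompactSupport f) (hgc : HasCompactSupport g) :
    sigmaN μ θ N (flow t f) (flow t g) = sigmaN μ θ N f g := by
  classical
  set c : ℝ := Real.exp (2 * π * t) with hcdef
  have hc : 0 < c := Real.exp_pos _
  set I : P3 → ℂ := fun p => starN θ N f (pdV g) p - starN θ N g (pdV f) p with hIdef
  -- structure of the flowed functions
  have hflowf : flow t f = fun p => f (sm c p) := rfl
  have hflowg : flow t g = fun p => g (sm c p) := rfl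
  have hTfg : ContDiff ℝ (⊤ : ℕ∞) (tensorF f (pdV g)) := contDiff_tensorF hf (contDiff_pdV hg)
  have hTgf : ContDiff ℝ (⊤ : ℕ∞) (tensorF g (pdV f)) := contDiff_tensorF hg (contDiff_pdV hf)
  -- pointwise identity for the integrand
  have key : ∀ (f g : P3 → ℂ), ContDiff ℝ (⊤ : ℕ∞) f → ContDiff ℝ (⊤ : ℕ∞) g →
      ∀ p, starN θ N (flow t f) (pdV (flow t g)) p = (c : ℂ) * starN θ N f (pdV g) (sm c p) := by
    intro f g hf hg p
    have hpdVg : pdV (flow t g) = fun p => (c : ℂ) * pdV g (sm c p) :=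
      pdV_comp_sm c g (hg.differentiable (by simp))
    have e2 : starN θ N (fun p => f (sm c p)) (fun p => (c : ℂ) * pdV g (sm c p))
        = fun p => (c : ℂ) * starN θ N (fun p => f (sm c p)) (fun p => pdV g (sm c p)) p :=
      starN_const_mul_right θ N _ _ _
    have e3 : starN θ N (fun p => f (sm c p)) (fun p => pdV g (sm c p)) p
        = starN θ N f (pdV g) (sm c p) :=
      starN_comp_sm c θ N f (pdV g) (contDiff_tensorF hf (contDiff_pdV hg)) p
    calc starN θ N (flow t f) (pdV (flow t g)) p
        = starN θ N (fun p => f (sm c p)) (fun p => (c : ℂ) * pdV g (sm c p)) p := by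
          rw [hpdVg]; rfl
      _ = (c : ℂ) * starN θ N (fun p => f (sm c p)) (fun p => pdV g (sm c p)) p := by
          rw [e2]
      _ = (c : ℂ) * starN θ N f (pdV g) (sm c p) := by rw [e3]
  have hpoint : ∀ p, starN θ N (flow t f) (pdV (flow t g)) p
      - starN θ N (flow t g) (pdV (flow t f)) p = (c : ℂ) * I (sm c p) := by
    intro p
    rw [key f g hf hg p, key g f hg hf p]
    show _ = (c : ℂ) * (starN θ N f (pdV g) (sm c p) - starN θ N g (pdV f) (sm c p))
    ring
  -- integrability
  haveI : IsFiniteMeasureOnCompacts (meas3 μ) := by unfold meas3; infer_instance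
  have hIcont : Continuous I :=
    (continuous_starN θ N f (pdV g) hTfg).sub (continuous_starN θ N g (pdV f) hTgf)
  have hIcs : HasCompactSupport I := by
    have h1 := hcs_starN θ N f (pdV g) hfc
    have h2 := hcs_starN θ N g (pdV f) hgc
    apply HasCompactSupport.intro (h1.union h2)
    intro p hp
    rw [Set.mem_union, not_or] at hp
    show starN θ N f (pdV g) p - starN θ N g (pdV f) p = 0
    rw [image_eq_zero_of_notMem_tsupport hp.1, image_eq_zero_of_notMem_tsupport hp.2, sub_zero]
  have hint : Integrable I (meas3 μ) := hIcont.integrable_of_hasCompactSupport hIcs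
  have hsmcont : Continuous (sm c) := by unfold sm; fun_prop
  have hIs_cs : HasCompactSupport fun p => I (sm c p) := by
    have := hIcs.comp_homeomorph
      ((Homeomorph.mulLeft₀ c hc.ne').prodCongr (Homeomorph.refl (ℝ × ℝ)))
    exact this
  have hint2 : Integrable (fun p => I (sm c p)) (meas3 μ) :=
    (hIcont.comp hsmcont).integrable_of_hasCompactSupport hIs_cs
  -- the computation
  have lhs_eq : sigmaN μ θ N (flow t f) (flow t g) = ∫ p, (c : ℂ) * I (sm c p) ∂(meas3 μ) := by
    unfold sigmaN
    rw [funext hpoint]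
  have rhs_eq : sigmaN μ θ N f g = ∫ p, I p ∂(meas3 μ) := rfl
  rw [lhs_eq, rhs_eq]
  rw [MeasureTheory.integral_const_mul]
  have hint2' : Integrable (fun p => I (sm c p))
      ((volume : Measure ℝ).prod (μ.prod (volume : Measure ℝ))) := hint2
  have hint' : Integrable I
      ((volume : Measure ℝ).prod (μ.prod (volume : Measure ℝ))) := hint
  have hlhs : (∫ p, I (sm c p) ∂(meas3 μ))
      = ∫ x : ℝ, ∫ y : ℝ × ℝ, I (sm c (x, y)) ∂(μ.prod volume) ∂(volume : Measure ℝ) := by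
    rw [show meas3 μ = (volume : Measure ℝ).prod (μ.prod (volume : Measure ℝ)) from rfl]
    exact MeasureTheory.integral_prod _ hint2'
  have hrhs : (∫ p, I p ∂(meas3 μ))
      = ∫ x : ℝ, ∫ y : ℝ × ℝ, I (x, y) ∂(μ.prod volume) ∂(volume : Measure ℝ) := by
    rw [show meas3 μ = (volume : Measure ℝ).prod (μ.prod (volume : Measure ℝ)) from rfl]
    exact MeasureTheory.integral_prod _ hint'
  rw [hlhs, hrhs]
  set G : ℝ → ℂ := fun x => ∫ y : ℝ × ℝ, I (x, y) ∂(μ.prod volume) with hGdef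
  have hG : (fun x : ℝ => ∫ y : ℝ × ℝ, I (sm c (x, y)) ∂(μ.prod volume))
      = fun x => G (c * x) := rfl
  rw [hG, MeasureTheory.Measure.integral_comp_mul_left G c]
  rw [abs_of_pos (inv_pos.2 hc)]
  rw [Complex.real_smul]
  push_cast
  rw [← mul_assoc, mul_inv_cancel₀ (by exact_mod_cast hc.ne' : (c : ℂ) ≠ 0), one_mul]


end
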